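/- arXiv:2105.07780 — 10 statements merged into one kernel-verified Lean document; each statement's English description precedes it below -/
import Mathlib

section
/- Crossbreeding [(1.2)×(1.3)] conserves the cell C₀: if sixteen positive real numbers a,b,c,d,e,f,g,h,i,j,k,l,m,n,o,p satisfy equations E2 and E3, then they satisfy equation E5. -/
theorem crossbreeding_E2_E3_conserves_C0
    (a b c d e f g h i j k l m n o p : ℝ)
    (ha : 0 < a) (hb : 0 < b) (hc : 0 < c) (hd : 0 < d) (he : 0 < e) (hf : 0 < f) (hg : 0 < g) (hh : 0 < h) (hi : 0 < i) (hj : 0 < j) (hk : 0 < k) (hl : 0 < l) (hm : 0 < m) (hn : 0 < n) (ho : 0 < o) (hp : 0 < p)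
    (hE2 : a*b*g + h*c = e*c*f + d*g)
    (hE3 : a*k*b + l*c = c*i*j + d*k) :
    k*e*f + l*g = g*j*i + h*k := by
  have h1 : c*(k*e*f + l*g) = c*(g*j*i + h*k) := by nlinarith [mul_pos hc hk, mul_pos hc hg]
  exact mul_left_cancel₀ (ne_of_gt hc) h1
end

section
/- Crossbreeding [(1.2)×(1.4)] conserves the cell C₀: if sixteen positive real numbers a,b,c,d,e,f,g,h,i,j,k,l,m,n,o,p satisfy equations E2 and E4, then they satisfy equation E6. -/
theorem crossbreeding_E2_E4_conserves_C0
    (a b c d e f g h i j k l m n o p : ℝ)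
    (ha : 0 < a) (hb : 0 < b) (hc : 0 < c) (hd : 0 < d) (he : 0 < e) (hf : 0 < f) (hg : 0 < g) (hh : 0 < h) (hi : 0 < i) (hj : 0 < j) (hk : 0 < k) (hl : 0 < l) (hm : 0 < m) (hn : 0 < n) (ho : 0 < o) (hp : 0 < p)
    (hE2 : a*b*g + h*c = e*c*f + d*g)
    (hE4 : a*b*o + c*p = n*m*c + d*o) :
    e*o*f + g*p = g*m*n + h*o := by
  have h1 : (a*b*o + c*p) * g = (n*m*c + d*o) * g := by rw [hE4]
  have h2 : (a*b*g + h*c) * o = (e*c*f + d*g) * o := by rw [hE2]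
  have hc' := hc.ne'
  have : c * (e*o*f + g*p) = c * (g*m*n + h*o) := by nlinarith [h1, h2]
  exact mul_left_cancel₀ hc' this
end

section
/- Crossbreeding [(1.2)×(1.5)] conserves the cell C₀: if sixteen positive real numbers a,b,c,d,e,f,g,h,i,j,k,l,m,n,o,p satisfy equations E2 and E5, then they satisfy equation E3. -/
theorem crossbreeding_E2_E5_conserves_C0
    (a b c d e f g h i j k l m n o p : ℝ)
    (ha : 0 < a) (hb : 0 < b) (hc : 0 < c) (hd : 0 < d) (he : 0 < e) (hf : 0 < f) (hg : 0 < g) (hh : 0 < h) (hi : 0 < i) (hj : 0 < j) (hk : 0 < k) (hl : 0 < l) (hm : 0 < m) (hn : 0 < n) (ho : 0 < o) (hp : 0 < p)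
    (hE2 : a*b*g + h*c = e*c*f + d*g)
    (hE5 : k*e*f + l*g = g*j*i + h*k) :
    a*k*b + l*c = c*i*j + d*k := by
  have hg' : g ≠ 0 := hg.ne'
  apply mul_left_cancel₀ hg'
  linear_combination k * hE2 + c * hE5
end

section
/- Crossbreeding [(1.2)×(1.6)] conserves the cell C₀: if sixteen positive real numbers a,b,c,d,e,f,g,h,i,j,k,l,m,n,o,p satisfy equations E2 and E6, then they satisfy equation E4. -/
theorem crossbreeding_E2_E6_conserves_C0
    (a b c d e f g h i j k l m n o p : ℝ)
    (ha : 0 < a) (hb : 0 < b) (hc : 0 < c) (hd : 0 < d) (he : 0 < e) (hf : 0 < f) (hg : 0 < g) (hh : 0 < h) (hi : 0 < i) (hj : 0 < j) (hk : 0 < k) (hl : 0 < l) (hm : 0 < m) (hn : 0 < n) (ho : 0 < o) (hp : 0 < p)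
    (hE2 : a*b*g + h*c = e*c*f + d*g)
    (hE6 : e*o*f + g*p = g*m*n + h*o) :
    a*b*o + c*p = n*m*c + d*o := by
  have key : g * (a*b*o + c*p) = g * (n*m*c + d*o) := by nlinarith [mul_comm o c]
  exact mul_left_cancel₀ (ne_of_gt hg) key
end

section
/- Crossbreeding [(1.3)×(1.4)] conserves the cell C₀: if sixteen positive real numbers a,b,c,d,e,f,g,h,i,j,k,l,m,n,o,p satisfy equations E3 and E4, then they satisfy equation E7. -/
theorem crossbreeding_E3_E4_conserves_C0
    (a b c d e f g h i j k l m n o p : ℝ)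
    (ha : 0 < a) (hb : 0 < b) (hc : 0 < c) (hd : 0 < d) (he : 0 < e) (hf : 0 < f) (hg : 0 < g) (hh : 0 < h) (hi : 0 < i) (hj : 0 < j) (hk : 0 < k) (hl : 0 < l) (hm : 0 < m) (hn : 0 < n) (ho : 0 < o) (hp : 0 < p)
    (hE3 : a*k*b + l*c = c*i*j + d*k)
    (hE4 : a*b*o + c*p = n*m*c + d*o) :
    j*o*i + k*p = k*n*m + l*o := by
  have h1 : c * (j*o*i + k*p) = c * (k*n*m + l*o) := by nlinarith [mul_pos hc hk, sq_nonneg (a*b)]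
  exact mul_left_cancel₀ (ne_of_gt hc) h1
end

section
/- Crossbreeding [(1.3)×(1.5)] conserves the cell C₀: if sixteen positive real numbers a,b,c,d,e,f,g,h,i,j,k,l,m,n,o,p satisfy equations E3 and E5, then they satisfy equation E2. -/
theorem crossbreeding_E3_E5_conserves_C0
    (a b c d e f g h i j k l m n o p : ℝ)
    (ha : 0 < a) (hb : 0 < b) (hc : 0 < c) (hd : 0 < d) (he : 0 < e) (hf : 0 < f) (hg : 0 < g) (hh : 0 < h) (hi : 0 < i) (hj : 0 < j) (hk : 0 < k) (hl : 0 < l) (hm : 0 < m) (hn : 0 < n) (ho : 0 < o) (hp : 0 < p)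
    (hE3 : a*k*b + l*c = c*i*j + d*k)
    (hE5 : k*e*f + l*g = g*j*i + h*k) :
    a*b*g + h*c = e*c*f + d*g := by
  have hk0 : k ≠ 0 := hk.ne'
  have h2 : k * (a*b*g + h*c) = k * (e*c*f + d*g) := by
    linear_combination g * hE3 - c * hE5
  exact mul_left_cancel₀ hk0 h2
end

section
/- Crossbreeding [(1.3)×(1.7)] conserves the cell C₀: if sixteen positive real numbers a,b,c,d,e,f,g,h,i,j,k,l,m,n,o,p satisfy equations E3 and E7, then they satisfy equation E4. -/
theorem crossbreeding_E3_E7_conserves_C0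
    (a b c d e f g h i j k l m n o p : ℝ)
    (ha : 0 < a) (hb : 0 < b) (hc : 0 < c) (hd : 0 < d) (he : 0 < e) (hf : 0 < f) (hg : 0 < g) (hh : 0 < h) (hi : 0 < i) (hj : 0 < j) (hk : 0 < k) (hl : 0 < l) (hm : 0 < m) (hn : 0 < n) (ho : 0 < o) (hp : 0 < p)
    (hE3 : a*k*b + l*c = c*i*j + d*k)
    (hE7 : j*o*i + k*p = k*n*m + l*o) :
    a*b*o + c*p = n*m*c + d*o := by
  have hk' : k ≠ 0 := ne_of_gt hk
  have key : k * (a*b*o + c*p) = k * (n*m*c + d*o) := by linear_combination o * hE3 + c * hE7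
  exact mul_left_cancel₀ hk' key
end

section
/- Crossbreeding [(1.4)×(1.7)] conserves the cell C₀: if sixteen positive real numbers a,b,c,d,e,f,g,h,i,j,k,l,m,n,o,p satisfy equations E4 and E7, then they satisfy equation E3. -/
theorem crossbreeding_E4_E7_conserves_C0
    (a b c d e f g h i j k l m n o p : ℝ)
    (ha : 0 < a) (hb : 0 < b) (hc : 0 < c) (hd : 0 < d) (he : 0 < e) (hf : 0 < f) (hg : 0 < g) (hh : 0 < h) (hi : 0 < i) (hj : 0 < j) (hk : 0 < k) (hl : 0 < l) (hm : 0 < m) (hn : 0 < n) (ho : 0 < o) (hp : 0 < p)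
    (hE4 : a*b*o + c*p = n*m*c + d*o)
    (hE7 : j*o*i + k*p = k*n*m + l*o) :
    a*k*b + l*c = c*i*j + d*k := by
  have key : o * (a*k*b + l*c) = o * (c*i*j + d*k) := by nlinarith [mul_pos hc hk]
  exact mul_left_cancel₀ (ne_of_gt ho) key
end

section
/- Crossbreeding [(1.5)×(1.7)] conserves the cell C₀: if sixteen positive real numbers a,b,c,d,e,f,g,h,i,j,k,l,m,n,o,p satisfy equations E5 and E7, then they satisfy equation E6. -/
theorem crossbreeding_E5_E7_conserves_C0
    (a b c d e f g h i j k l m n o p : ℝ)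
    (ha : 0 < a) (hb : 0 < b) (hc : 0 < c) (hd : 0 < d) (he : 0 < e) (hf : 0 < f) (hg : 0 < g) (hh : 0 < h) (hi : 0 < i) (hj : 0 < j) (hk : 0 < k) (hl : 0 < l) (hm : 0 < m) (hn : 0 < n) (ho : 0 < o) (hp : 0 < p)
    (hE5 : k*e*f + l*g = g*j*i + h*k)
    (hE7 : j*o*i + k*p = k*n*m + l*o) :
    e*o*f + g*p = g*m*n + h*o := by
  have key : k*(e*o*f + g*p) = k*(g*m*n + h*o) := by linear_combination o*hE5 + g*hE7
  exact mul_left_cancel₀ (ne_of_gt hk) key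
end

section
/- Cancerous growth of the cell C₀: if sixteen positive real numbers a,b,c,d,e,f,g,h,i,j,k,l,m,n,o,p satisfy the six equations E2, E3, E4, E5, E6, E7 of the cell C₀, then they satisfy the meta-functional equation of type (7,7,7,6,6)↔(7,7,7,6,6): b·l·o·a·h·j·i + b·l²·a·n·g·m + k·n·e·l·d·m·f + a·h·k·b·l·p + e·l²·c·f·p = e·l·o·d·j·f·i + e·l²·c·f·n·m + a·h·k·n·b·l·m + e·l·f·p·k·d + b·l²·a·g·p. -/
theorem cancerous_growth_C0
    (a b c d e f g h i j k l m n o p : ℝ)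
    (ha : 0 < a) (hb : 0 < b) (hc : 0 < c) (hd : 0 < d) (he : 0 < e) (hf : 0 < f) (hg : 0 < g) (hh : 0 < h) (hi : 0 < i) (hj : 0 < j) (hk : 0 < k) (hl : 0 < l) (hm : 0 < m) (hn : 0 < n) (ho : 0 < o) (hp : 0 < p)
    (hE2 : a*b*g + h*c = e*c*f + d*g)
    (hE3 : a*k*b + l*c = c*i*j + d*k)
    (hE4 : a*b*o + c*p = n*m*c + d*o)
    (hE5 : k*e*f + l*g = g*j*i + h*k)
    (hE6 : e*o*f + g*p = g*m*n + h*o)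
    (hE7 : j*o*i + k*p = k*n*m + l*o) :
    b*l*o*a*h*j*i + b*l^2*a*n*g*m + k*n*e*l*d*m*f + a*h*k*b*l*p + e*l^2*c*f*p = e*l*o*d*j*f*i + e*l^2*c*f*n*m + a*h*k*n*b*l*m + e*l*f*p*k*d + b*l^2*a*g*p := by
  linear_combination (l^2*n*m - l*p*i*j) * hE2 + (e*l*f*p - h*l*p) * hE3 + (h*l^2) * hE4 +
    (d*l*p - a*b*l*p) * hE5 + (-(d*l^2)) * hE6 + (l*(a*b*h - e*f*d)) * hE7
end
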